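/- For any n ∈ ℕ and any A > 0, there exists f ∈ C² ∩ Δ^(0)({0}) such that, for every polynomial P_n of degree ≤ n with P_n ∈ Δ^(0)({0}) and satisfying P_n(0) = f(0) and P_n'(0) = f'(0), one has ‖f - P_n‖ > A ω₄(f'', 1). Hence copositive approximation with first-order Hermite interpolation at the sign-change point 0 cannot achieve the rate ω₄(f'', 1) for f ∈ C². -/

import Mathlib

/-- The `k`-th modulus of smoothness of `g` with step bound `t` on `[a,b]`. -/
noncomputable def omegaK (g : ℝ → ℝ) (k : ℕ) (t a b : ℝ) : ℝ :=
  sSup {v : ℝ | ∃ h x : ℝ, 0 < h ∧ h ≤ t ∧ a ≤ x ∧ x + (k : ℝ) * h ≤ b ∧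
    v = |∑ i ∈ Finset.range (k + 1),
      (-1 : ℝ) ^ (k - i) * (k.choose i : ℝ) * g (x + (i : ℝ) * h)|}

/-- The sup norm of `g` on `[a,b]`. -/
noncomputable def supNorm (g : ℝ → ℝ) (a b : ℝ) : ℝ :=
  sSup ((fun x => |g x|) '' Set.Icc a b)

/-- `g ∈ Δ^(0)({0})`: `g ≤ 0` on `[-1,0]` and `g ≥ 0` on `[0,1]`. -/
def Delta0Zero (g : ℝ → ℝ) : Prop :=
  (∀ x ∈ Set.Icc (-1 : ℝ) 0, g x ≤ 0) ∧ (∀ x ∈ Set.Icc (0 : ℝ) 1, 0 ≤ g x)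

/-! For small `e > 0` let `f = witness e`: it equals `x⁵ - e²x³` for `x² ≥ 2e²` and is repaired
near `0` by a `C²` bump so that it stays copositive. Its second derivative differs from the cubic
`20x³ - 6e²x` by `O(e³)`, and fourth differences annihilate cubics, so `ω₄(f'', 1) = O(e³)`.
On the other hand a copositive `P` with `P(0) = P'(0) = 0` is `x³ R` with `R(0) ≥ 0`, so
`x⁵ - e²x³ - P` has `x³`-coefficient of modulus at least `e²`. Coefficients of polynomials of
bounded degree are controlled by their sup norm on `[1/2, 1]`, where `f = x⁵ - e²x³`; hence
`‖f - P‖ ≳ e²`, which beats `A · O(e³)` once `e` is small. -/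

open Set Filter Topology Asymptotics Finset Polynomial

lemma nonneg_of_forall_Ioc_nonneg {g : ℝ → ℝ} {a b : ℝ} (hg : Continuous g) (hab : a < b)
    (h : ∀ x ∈ Ioc a b, 0 ≤ g x) : 0 ≤ g a := by
  have : closure (Ioc a b) ⊆ {x | 0 ≤ g x} :=
    (isClosed_le continuous_const hg).closure_subset_iff.mpr h
  exact this (by rw [closure_Ioc hab.ne]; exact left_mem_Icc.mpr hab.le)

lemma nonpos_of_forall_Ico_nonpos {g : ℝ → ℝ} {a b : ℝ} (hg : Continuous g) (hab : a < b)
    (h : ∀ x ∈ Ico a b, g x ≤ 0) : g b ≤ 0 := by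
  have : closure (Ico a b) ⊆ {x | g x ≤ 0} :=
    (isClosed_le hg continuous_const).closure_subset_iff.mpr h
  exact this (by rw [closure_Ico hab.ne]; exact right_mem_Icc.mpr hab.le)

lemma abs_le_supNorm {g : ℝ → ℝ} {a b x : ℝ} (hg : ContinuousOn g (Icc a b)) (hx : x ∈ Icc a b) :
    |g x| ≤ supNorm g a b :=
  le_csSup (isCompact_Icc.image_of_continuousOn hg.abs).bddAbove ⟨x, hx, rfl⟩

lemma omegaK_le {g : ℝ → ℝ} {k : ℕ} {t a b B : ℝ} (hB : 0 ≤ B)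
    (h : ∀ h x : ℝ, 0 < h → h ≤ t → a ≤ x → x + k * h ≤ b →
      |∑ i ∈ range (k + 1), (-1 : ℝ) ^ (k - i) * (k.choose i : ℝ) * g (x + i * h)| ≤ B) :
    omegaK g k t a b ≤ B :=
  Real.sSup_le (fun _ ⟨h', x, hh, hht, hax, hxb, hv⟩ => hv ▸ h h' x hh hht hax hxb) hB

lemma abs_sum_alternating_choose_mul_le {η : ℕ → ℝ} {M : ℝ} (k : ℕ)
    (hη : ∀ i ∈ range (k + 1), |η i| ≤ M) :
    |∑ i ∈ range (k + 1), (-1 : ℝ) ^ (k - i) * (k.choose i : ℝ) * η i| ≤ 2 ^ k * M := by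
  calc |∑ i ∈ range (k + 1), (-1 : ℝ) ^ (k - i) * (k.choose i : ℝ) * η i|
      ≤ ∑ i ∈ range (k + 1), (k.choose i : ℝ) * M := by
        refine (abs_sum_le_sum_abs _ _).trans (sum_le_sum fun i hi => ?_)
        rw [abs_mul, abs_mul, abs_pow, abs_neg, abs_one, one_pow, one_mul, Nat.abs_cast]
        exact mul_le_mul_of_nonneg_left (hη i hi) (Nat.cast_nonneg _)
    _ = 2 ^ k * M := by rw [← sum_mul, ← Nat.cast_sum, Nat.sum_range_choose]; push_cast; ring

lemma add_mul_mem_Icc {a b x h : ℝ} {k i : ℕ} (hh : 0 ≤ h) (hax : a ≤ x) (hxb : x + k * h ≤ b)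
    (hi : i ∈ range (k + 1)) : x + i * h ∈ Icc a b := by
  have hik : (i : ℝ) ≤ k := by exact_mod_cast Nat.lt_succ_iff.mp (mem_range.mp hi)
  constructor <;> nlinarith [mul_le_mul_of_nonneg_right hik hh]

lemma omegaK_four_le_of_abs_sub_cubic_le {g : ℝ → ℝ} {t a b M c₀ c₁ c₂ c₃ : ℝ} (hM : 0 ≤ M)
    (hg : ∀ x ∈ Icc a b, |g x - (c₃ * x ^ 3 + c₂ * x ^ 2 + c₁ * x + c₀)| ≤ M) :
    omegaK g 4 t a b ≤ 16 * M := by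
  refine omegaK_le (by positivity) fun h x hh _ hax hxb => ?_
  set η : ℕ → ℝ := fun i => g (x + i * h) - (c₃ * (x + i * h) ^ 3 + c₂ * (x + i * h) ^ 2
    + c₁ * (x + i * h) + c₀)
  have hsum : ∑ i ∈ range (4 + 1), (-1 : ℝ) ^ (4 - i) * ((4 : ℕ).choose i : ℝ) * g (x + i * h)
      = ∑ i ∈ range (4 + 1), (-1 : ℝ) ^ (4 - i) * ((4 : ℕ).choose i : ℝ) * η i := by
    simp only [η, sum_range_succ, sum_range_zero, Nat.choose]
    push_cast
    ring
  rw [hsum, show (16 : ℝ) = 2 ^ 4 by norm_num]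
  exact abs_sum_alternating_choose_mul_le 4 fun i hi => hg _ (add_mul_mem_Icc hh.le hax hxb hi)

lemma hasDerivAt_max_zero_pow {k : ℕ} (hk : 2 ≤ k) (t : ℝ) :
    HasDerivAt (fun t : ℝ => max t 0 ^ k) (k * max t 0 ^ (k - 1)) t := by
  rcases lt_trichotomy t 0 with ht | rfl | ht
  · have he : (fun _ => (0 : ℝ)) =ᶠ[𝓝 t] fun t : ℝ => max t 0 ^ k := by
      filter_upwards [Iio_mem_nhds ht] with y hy
      rw [max_eq_right (le_of_lt hy), zero_pow (by omega)]
    rw [max_eq_right ht.le, zero_pow (by omega), mul_zero]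
    exact (hasDerivAt_const t 0).congr_of_eventuallyEq he.symm
  · have hbig : (fun y : ℝ => max y 0 ^ k) =O[𝓝 0] fun y => y ^ k :=
      IsBigO.of_bound 1 (Eventually.of_forall fun y => by
        rw [one_mul, norm_pow, norm_pow]
        gcongr
        rcases le_total y 0 with h | h <;> simp [h, abs_nonneg])
    rw [hasDerivAt_iff_isLittleO]
    simpa [zero_pow (by omega : k ≠ 0), zero_pow (by omega : k - 1 ≠ 0)] using
      hbig.trans_isLittleO (isLittleO_pow_pow (by omega : 1 < k))
  · have he : (fun y : ℝ => y ^ k) =ᶠ[𝓝 t] fun y => max y 0 ^ k := by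
      filter_upwards [Ioi_mem_nhds ht] with y hy
      rw [max_eq_left (le_of_lt hy)]
    rw [max_eq_left ht.le]
    exact (hasDerivAt_pow k t).congr_of_eventuallyEq he.symm

namespace Polynomial

lemma X_sq_dvd_of_eval_zero {P : ℝ[X]} (h₀ : P.eval 0 = 0) (h₁ : P.derivative.eval 0 = 0) :
    X ^ 2 ∣ P := by
  rw [X_pow_dvd_iff]
  intro d hd
  interval_cases d
  · rwa [coeff_zero_eq_eval_zero]
  · have h := coeff_derivative P 0
    rw [coeff_zero_eq_eval_zero, h₁] at h
    simpa using h.symm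

lemma coeff_one_nonneg_of_sign_change {S : ℝ[X]} (hneg : ∀ x ∈ Ico (-1 : ℝ) 0, S.eval x ≤ 0)
    (hpos : ∀ x ∈ Ioc (0 : ℝ) 1, 0 ≤ S.eval x) : 0 ≤ S.coeff 1 := by
  have hS0 : S.eval 0 = 0 := le_antisymm
    (nonpos_of_forall_Ico_nonpos S.continuous (by norm_num) hneg)
    (nonneg_of_forall_Ioc_nonneg S.continuous (by norm_num) hpos)
  obtain ⟨R, rfl⟩ : X ∣ S := by rwa [X_dvd_iff, coeff_zero_eq_eval_zero]
  rw [coeff_X_mul, coeff_zero_eq_eval_zero]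
  refine nonneg_of_forall_Ioc_nonneg R.continuous zero_lt_one fun x hx => ?_
  have := hpos x hx
  rw [eval_mul, eval_X] at this
  exact nonneg_of_mul_nonneg_right this hx.1

lemma coeff_three_nonneg_of_X_sq_dvd {P : ℝ[X]} (hP : X ^ 2 ∣ P)
    (hcop : Delta0Zero fun x => P.eval x) : 0 ≤ P.coeff 3 := by
  obtain ⟨S, rfl⟩ := hP
  rw [show 3 = 1 + 2 from rfl, coeff_X_pow_mul]
  refine coeff_one_nonneg_of_sign_change (fun x hx => ?_) fun x hx => ?_
  · have : (X ^ 2 * S).eval x ≤ 0 := hcop.1 x ⟨hx.1, hx.2.le⟩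
    rw [eval_mul, eval_pow, eval_X] at this
    exact nonpos_of_mul_nonpos_right this (by nlinarith [hx.2])
  · have : 0 ≤ (X ^ 2 * S).eval x := hcop.2 x ⟨hx.1.le, hx.2⟩
    rw [eval_mul, eval_pow, eval_X] at this
    exact nonneg_of_mul_nonneg_right this (by nlinarith [hx.1])

lemma exists_abs_coeff_le_mul_of_abs_eval_le (N k : ℕ) {a b : ℝ} (hab : a < b) :
    ∃ C > 0, ∀ U : ℝ[X], U.natDegree ≤ N → ∀ E : ℝ,
      (∀ x ∈ Icc a b, |U.eval x| ≤ E) → |U.coeff k| ≤ C * E := by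
  set s := range (N + 1)
  set v : ℕ → ℝ := fun i => a + (b - a) * i / (N + 1)
  have hv : ∀ i ∈ s, v i ∈ Icc a b := fun i hi => by
    have hiN : (i : ℝ) ≤ N + 1 := by exact_mod_cast (mem_range.mp hi).le
    have : 0 ≤ (b - a) * i / (N + 1) := by have := hab.le; positivity
    refine ⟨by linarith, ?_⟩
    rw [← sub_nonneg]
    have : (b - a) * i / (N + 1) ≤ b - a := by
      rw [div_le_iff₀ (by positivity)]; nlinarith
    linarith
  have hinj : Set.InjOn v s := fun i _ j _ hij => by
    have : (b - a) * i / (N + 1) = (b - a) * j / (N + 1) := add_left_cancel hij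
    rw [div_left_inj' (by positivity), mul_right_inj' (sub_ne_zero.mpr hab.ne')] at this
    exact_mod_cast this
  set C := ∑ i ∈ s, |(Lagrange.basis s v i).coeff k|
  refine ⟨C + 1, by positivity, fun U hU E hE => ?_⟩
  have hE0 : 0 ≤ E := (abs_nonneg _).trans (hE a (left_mem_Icc.mpr hab.le))
  have hdeg : U.degree < #s := by
    rw [card_range]
    exact (degree_le_natDegree).trans_lt (by exact_mod_cast Nat.lt_succ_of_le hU)
  have hcoeff : U.coeff k = ∑ i ∈ s, U.eval (v i) * (Lagrange.basis s v i).coeff k := by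
    conv_lhs => rw [Lagrange.eq_interpolate hinj hdeg]
    simp only [Lagrange.interpolate_apply, finsetSum_coeff, coeff_C_mul]
  calc |U.coeff k| ≤ ∑ i ∈ s, |U.eval (v i)| * |(Lagrange.basis s v i).coeff k| := by
        rw [hcoeff]
        exact (abs_sum_le_sum_abs _ _).trans_eq (sum_congr rfl fun i _ => abs_mul _ _)
    _ ≤ ∑ i ∈ s, E * |(Lagrange.basis s v i).coeff k| :=
        sum_le_sum fun i hi => mul_le_mul_of_nonneg_right (hE _ (hv i hi)) (abs_nonneg _)
    _ = C * E := by rw [← mul_sum, mul_comm]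
    _ ≤ (C + 1) * E := by nlinarith

end Polynomial

noncomputable def bump (e x : ℝ) : ℝ := max (1 - x ^ 2 / (2 * e ^ 2)) 0

noncomputable def witness (e x : ℝ) : ℝ :=
  x ^ 5 - e ^ 2 * x ^ 3 + 2 * e ^ 2 * x ^ 3 * bump e x ^ 3

noncomputable def witnessDeriv (e x : ℝ) : ℝ :=
  5 * x ^ 4 - 3 * e ^ 2 * x ^ 2 + 6 * e ^ 2 * x ^ 2 * bump e x ^ 3 - 6 * x ^ 4 * bump e x ^ 2

noncomputable def witnessDeriv2 (e x : ℝ) : ℝ :=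
  20 * x ^ 3 - 6 * e ^ 2 * x + 12 * e ^ 2 * x * bump e x ^ 3 - 42 * x ^ 3 * bump e x ^ 2
    + 12 * x ^ 5 * bump e x / e ^ 2

noncomputable def witnessPoly (e : ℝ) : ℝ[X] := X ^ 5 - C (e ^ 2) * X ^ 3

section Witness

variable {e : ℝ}

lemma bump_nonneg (x : ℝ) : 0 ≤ bump e x := le_max_right _ _

lemma bump_le_one (x : ℝ) : bump e x ≤ 1 :=
  max_le (by linarith [show 0 ≤ x ^ 2 / (2 * e ^ 2) by positivity]) zero_le_one

lemma bump_eq_zero (he : e ≠ 0) {x : ℝ} (hx : 2 * e ^ 2 ≤ x ^ 2) : bump e x = 0 :=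
  max_eq_right (sub_nonpos.mpr (by rwa [le_div_iff₀ (by positivity), one_mul]))

lemma hasDerivAt_bump_pow (he : e ≠ 0) {k : ℕ} (hk : 2 ≤ k) (x : ℝ) :
    HasDerivAt (fun x => bump e x ^ k) (k * bump e x ^ (k - 1) * (-x / e ^ 2)) x := by
  have hinner : HasDerivAt (fun x : ℝ => 1 - x ^ 2 / (2 * e ^ 2)) (-x / e ^ 2) x := by
    refine ((hasDerivAt_const x (1 : ℝ)).sub
      ((hasDerivAt_pow 2 x).div_const (2 * e ^ 2))).congr_deriv ?_
    field_simp
    ring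
  exact (hasDerivAt_max_zero_pow hk _).comp x hinner

lemma hasDerivAt_witness (he : e ≠ 0) (x : ℝ) : HasDerivAt (witness e) (witnessDeriv e x) x := by
  refine (((hasDerivAt_pow 5 x).sub ((hasDerivAt_pow 3 x).const_mul (e ^ 2))).add
    (((hasDerivAt_pow 3 x).const_mul (2 * e ^ 2)).mul
      (hasDerivAt_bump_pow he (k := 3) (by norm_num) x))).congr_deriv ?_
  unfold witnessDeriv
  field_simp
  ring

lemma hasDerivAt_witnessDeriv (he : e ≠ 0) (x : ℝ) :
    HasDerivAt (witnessDeriv e) (witnessDeriv2 e x) x := by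
  refine (((((hasDerivAt_pow 4 x).const_mul 5).sub
    ((hasDerivAt_pow 2 x).const_mul (3 * e ^ 2))).add
    (((hasDerivAt_pow 2 x).const_mul (6 * e ^ 2)).mul
      (hasDerivAt_bump_pow he (k := 3) (by norm_num) x))).sub
    (((hasDerivAt_pow 4 x).const_mul 6).mul
      (hasDerivAt_bump_pow he (k := 2) le_rfl x))).congr_deriv ?_
  unfold witnessDeriv2
  field_simp
  ring

lemma continuous_bump : Continuous (bump e) := by
  unfold bump
  fun_prop

lemma contDiff_witness (he : e ≠ 0) : ContDiff ℝ 2 (witness e) := by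
  rw [show (2 : WithTop ℕ∞) = 1 + 1 from rfl, contDiff_succ_iff_deriv,
    funext fun x => (hasDerivAt_witness he x).deriv, contDiff_one_iff_deriv,
    funext fun x => (hasDerivAt_witnessDeriv he x).deriv]
  refine ⟨fun x => (hasDerivAt_witness he x).differentiableAt, by simp,
    fun x => (hasDerivAt_witnessDeriv he x).differentiableAt, ?_⟩
  have := continuous_bump (e := e)
  unfold witnessDeriv2
  fun_prop

lemma iteratedDeriv_two_witness (he : e ≠ 0) :
    iteratedDeriv 2 (witness e) = witnessDeriv2 e := by
  rw [iteratedDeriv_succ, iteratedDeriv_one, funext fun x => (hasDerivAt_witness he x).deriv]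
  exact funext fun x => (hasDerivAt_witnessDeriv he x).deriv

lemma iteratedDerivWithin_witness (he : e ≠ 0) {n : ℕ} (hn : n ≤ 2) {x : ℝ}
    (hx : x ∈ Icc (-1 : ℝ) 1) :
    iteratedDerivWithin n (witness e) (Icc (-1) 1) x = iteratedDeriv n (witness e) x :=
  iteratedDerivWithin_eq_iteratedDeriv (uniqueDiffOn_Icc (by norm_num))
    ((contDiff_witness he).contDiffAt.of_le (by exact_mod_cast hn)) hx

lemma iteratedDerivWithin_one_witness_zero (he : e ≠ 0) :
    iteratedDerivWithin 1 (witness e) (Icc (-1) 1) 0 = 0 := by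
  rw [iteratedDerivWithin_witness he (by norm_num) (by norm_num), iteratedDeriv_one,
    (hasDerivAt_witness he 0).deriv]
  simp [witnessDeriv]

lemma witness_eq_eval_witnessPoly (he : e ≠ 0) {x : ℝ} (hx : 2 * e ^ 2 ≤ x ^ 2) :
    witness e x = (witnessPoly e).eval x := by
  simp [witness, witnessPoly, bump_eq_zero he hx]

lemma natDegree_witnessPoly_le : (witnessPoly e).natDegree ≤ 5 := by
  unfold witnessPoly
  compute_degree!

lemma coeff_three_witnessPoly : (witnessPoly e).coeff 3 = -e ^ 2 := by
  simp only [witnessPoly, coeff_sub, coeff_C_mul_X_pow, coeff_X_pow]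
  norm_num

lemma sq_sub_sq_add_bump_nonneg (x : ℝ) : 0 ≤ x ^ 2 - e ^ 2 + 2 * e ^ 2 * bump e x ^ 3 := by
  rcases eq_or_ne e 0 with rfl | he
  · simp [sq_nonneg]
  rcases le_or_gt (2 * e ^ 2) (x ^ 2) with hx | hx
  · rw [bump_eq_zero he hx]
    nlinarith
  obtain ⟨u, hu0, hu1, hxu⟩ : ∃ u, 0 ≤ u ∧ u ≤ 1 ∧ x ^ 2 = 2 * e ^ 2 * u :=
    ⟨x ^ 2 / (2 * e ^ 2), by positivity, by rw [div_le_one (by positivity)]; exact hx.le,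
      by field_simp⟩
  have hbump : bump e x = 1 - u := by
    rw [bump, hxu, mul_div_cancel_left₀ _ (by positivity)]
    exact max_eq_left (sub_nonneg.mpr hu1)
  rw [hbump, hxu, show 2 * e ^ 2 * u - e ^ 2 + 2 * e ^ 2 * (1 - u) ^ 3
    = e ^ 2 * ((1 - 2 * u) ^ 2 + 2 * u ^ 2 * (1 - u)) by ring]
  have := sub_nonneg.mpr hu1
  positivity

lemma delta0Zero_witness : Delta0Zero (witness e) := by
  have hfactor (x : ℝ) : witness e x = x ^ 3 * (x ^ 2 - e ^ 2 + 2 * e ^ 2 * bump e x ^ 3) := by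
    unfold witness; ring
  refine ⟨fun x hx => ?_, fun x hx => ?_⟩ <;> rw [hfactor]
  · exact mul_nonpos_of_nonpos_of_nonneg (Odd.pow_nonpos (by decide) hx.2)
      (sq_sub_sq_add_bump_nonneg x)
  · exact mul_nonneg (pow_nonneg hx.1 3) (sq_sub_sq_add_bump_nonneg x)

lemma abs_witnessDeriv2_sub_cubic_le (he : 0 < e) (x : ℝ) :
    |witnessDeriv2 e x - (20 * x ^ 3 - 6 * e ^ 2 * x)| ≤ 216 * e ^ 3 := by
  rcases le_or_gt (2 * e ^ 2) (x ^ 2) with hx | hx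
  · simp [witnessDeriv2, bump_eq_zero he.ne' hx]
    positivity
  set m := bump e x
  have hm0 : 0 ≤ m := bump_nonneg x
  have hm1 : m ≤ 1 := bump_le_one x
  set y := x ^ 4 / e ^ 2
  have hy0 : 0 ≤ y := by positivity
  have hy : y ≤ 4 * e ^ 2 := by
    rw [div_le_iff₀ (by positivity)]; nlinarith
  have hsplit : witnessDeriv2 e x - (20 * x ^ 3 - 6 * e ^ 2 * x)
      = x * (12 * e ^ 2 * m ^ 3 - 42 * x ^ 2 * m ^ 2 + 12 * y * m) := by
    unfold witnessDeriv2; ring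
  have hfactor : |12 * e ^ 2 * m ^ 3 - 42 * x ^ 2 * m ^ 2 + 12 * y * m| ≤ 144 * e ^ 2 := by
    have hm3 : m ^ 3 ≤ 1 := pow_le_one₀ hm0 hm1
    have hm2 : m ^ 2 ≤ 1 := pow_le_one₀ hm0 hm1
    rw [abs_le]; constructor <;>
      nlinarith [mul_nonneg (sq_nonneg e) (pow_nonneg hm0 3),
        mul_nonneg (sq_nonneg x) (pow_nonneg hm0 2), mul_nonneg hy0 hm0,
        mul_le_mul_of_nonneg_left hm3 (sq_nonneg e),
        mul_le_mul_of_nonneg_left hm2 (sq_nonneg x), mul_le_mul hy hm1 hm0 (by positivity)]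
  have habs : |x| ≤ 3 / 2 * e := abs_le_of_sq_le_sq (by nlinarith) (by positivity)
  rw [hsplit, abs_mul]
  calc |x| * |12 * e ^ 2 * m ^ 3 - 42 * x ^ 2 * m ^ 2 + 12 * y * m|
      ≤ 3 / 2 * e * (144 * e ^ 2) := mul_le_mul habs hfactor (abs_nonneg _) (by positivity)
    _ = 216 * e ^ 3 := by ring

lemma omegaK_witness_le (he : 0 < e) :
    omegaK (iteratedDerivWithin 2 (witness e) (Icc (-1) 1)) 4 1 (-1) 1 ≤ 3456 * e ^ 3 := by
  have := omegaK_four_le_of_abs_sub_cubic_le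
    (g := iteratedDerivWithin 2 (witness e) (Icc (-1) 1)) (t := 1) (a := -1) (b := 1)
    (M := 216 * e ^ 3) (c₃ := 20) (c₂ := 0) (c₁ := -6 * e ^ 2) (c₀ := 0)
    (by positivity) fun x hx => by
      rw [iteratedDerivWithin_witness he.ne' le_rfl hx, iteratedDeriv_two_witness he.ne']
      convert abs_witnessDeriv2_sub_cubic_le he x using 2
      ring
  linarith

lemma sq_le_abs_coeff_three_witnessPoly_sub {P : ℝ[X]} (hP : X ^ 2 ∣ P)
    (hcop : Delta0Zero fun x => P.eval x) : e ^ 2 ≤ |(witnessPoly e - P).coeff 3| := by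
  have h3 := coeff_three_nonneg_of_X_sq_dvd hP hcop
  rw [coeff_sub, coeff_three_witnessPoly, abs_of_nonpos (by nlinarith)]
  linarith

lemma abs_eval_witnessPoly_sub_le_supNorm (he : 0 < e) (he4 : e ≤ 1 / 4) (P : ℝ[X]) {x : ℝ}
    (hx : x ∈ Icc (1 / 2 : ℝ) 1) :
    |(witnessPoly e - P).eval x| ≤ supNorm (fun x => witness e x - P.eval x) (-1) 1 := by
  rw [eval_sub, ← witness_eq_eval_witnessPoly he.ne' (by nlinarith [hx.1])]
  exact abs_le_supNorm (g := fun x => witness e x - P.eval x)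
    ((contDiff_witness he.ne').continuous.sub P.continuous).continuousOn ⟨by linarith [hx.1], hx.2⟩

end Witness

theorem statement15_general (n : ℕ) (A : ℝ) (hA : 0 < A) :
    ∃ f : ℝ → ℝ, ContDiffOn ℝ 2 f (Set.Icc (-1 : ℝ) 1) ∧ Delta0Zero f ∧
      ∀ P : Polynomial ℝ, P.natDegree ≤ n →
        Delta0Zero (fun x => P.eval x) →
        P.eval 0 = f 0 →
        (Polynomial.derivative P).eval 0
          = iteratedDerivWithin 1 f (Set.Icc (-1 : ℝ) 1) 0 →
        A * omegaK (iteratedDerivWithin 2 f (Set.Icc (-1 : ℝ) 1)) 4 1 (-1) 1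
          < supNorm (fun x => f x - P.eval x) (-1) 1 := by
  obtain ⟨K, hK, hcoeff⟩ :=
    exists_abs_coeff_le_mul_of_abs_eval_le (max n 5) 3 (by norm_num : (1 / 2 : ℝ) < 1)
  obtain ⟨c, hc, hcAK⟩ := exists_pos_mul_lt one_pos (3456 * A * K)
  set e := min (1 / 4) c
  have he : 0 < e := lt_min (by norm_num) hc
  have heAK : 3456 * A * K * e < 1 :=
    (mul_le_mul_of_nonneg_left (min_le_right _ _) (by positivity)).trans_lt hcAK
  refine ⟨witness e, (contDiff_witness he.ne').contDiffOn, delta0Zero_witness,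
    fun P hP hcop h₀ h₁ => ?_⟩
  have hX2 : X ^ 2 ∣ P := X_sq_dvd_of_eval_zero (by simpa [witness] using h₀)
    (h₁.trans (iteratedDerivWithin_one_witness_zero he.ne'))
  set E := supNorm (fun x => witness e x - P.eval x) (-1) 1
  have hdeg : (witnessPoly e - P).natDegree ≤ max n 5 := (natDegree_sub_le _ _).trans
    (max_le (le_max_of_le_right natDegree_witnessPoly_le) (le_max_of_le_left hP))
  have hE : e ^ 2 ≤ K * E := (sq_le_abs_coeff_three_witnessPoly_sub hX2 hcop).trans <|
    hcoeff _ hdeg E fun x hx => abs_eval_witnessPoly_sub_le_supNorm he (min_le_left _ _) P hx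
  calc A * omegaK (iteratedDerivWithin 2 (witness e) (Icc (-1 : ℝ) 1)) 4 1 (-1) 1
      ≤ A * (3456 * e ^ 3) := mul_le_mul_of_nonneg_left (omegaK_witness_le he) hA.le
    _ < E := by
      refine lt_of_mul_lt_mul_left ?_ hK.le
      calc K * (A * (3456 * e ^ 3)) = e ^ 2 * (3456 * A * K * e) := by ring
        _ < e ^ 2 := mul_lt_of_lt_one_right (by positivity) heAK
        _ ≤ K * E := hE

/-- Copositive approximation with interpolation at `Y_s = {0}`, negative result for
`f ∈ C²`: for any `n ∈ ℕ` and `A > 0`, there is `f ∈ C²[-1,1] ∩ Δ^(0)({0})` such that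
any polynomial of degree ≤ n in `Δ^(0)({0})` with `P_n(0) = f(0)` and `P_n'(0) = f'(0)`
satisfies `‖f - P_n‖ > A ω₄(f'', 1)`. -/
theorem statement15 (n : ℕ) (hn : 1 ≤ n) (A : ℝ) (hA : 0 < A) :
    ∃ f : ℝ → ℝ, ContDiffOn ℝ 2 f (Set.Icc (-1 : ℝ) 1) ∧ Delta0Zero f ∧
      ∀ P : Polynomial ℝ, P.natDegree ≤ n →
        Delta0Zero (fun x => P.eval x) →
        P.eval 0 = f 0 →
        (Polynomial.derivative P).eval 0
          = iteratedDerivWithin 1 f (Set.Icc (-1 : ℝ) 1) 0 →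
        A * omegaK (iteratedDerivWithin 2 f (Set.Icc (-1 : ℝ) 1)) 4 1 (-1) 1
          < supNorm (fun x => f x - P.eval x) (-1) 1 :=
  statement15_general n A hA
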